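/- Let k be a commutative ring, λ ∈ k, and let M be the free k-module with basis {u_n : n ≥ 0} equipped with: the product ⋄ determined by u_m ⋄ u_n = Σ_{r=0}^{min(m,n)} C(m+n−r, m)·C(m, r)·(−λ²)^r·u_{m+n−2r}, and the coproduct Δ : M → M ⊗ M with Δ(u_0) = u_0 ⊗ u_0 and Δ(u_n) = Σ_{r=0}^{n} u_r ⊗ u_{n−r} + λ·Σ_{r=0}^{n−1} u_r ⊗ u_{n−1−r} for n ≥ 1. Equip M ⊗ M with the componentwise product (x ⊗ y)·(x' ⊗ y') = (x ⋄ x') ⊗ (y ⋄ y'). Then Δ is multiplicative: Δ(a ⋄ b) = Δ(a)·Δ(b) for all a, b ∈ M. -/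

import Mathlib

/-!
The shift `P : u_n ↦ u_{n+1}` makes `(M, ⋄)` a modified Rota–Baxter algebra of weight `-λ²`
with unit `u_0`: the closed formula satisfies `P x ⋄ P y = P (x ⋄ P y) + P (P x ⋄ y) - λ² x ⋄ y`
by two applications of Pascal's rule. The coproduct is a cocycle,
`Δ ∘ P = (id ⊗ P) ∘ Δ + ((P + λ) ·) ⊗ u_0`, and `id ⊗ P` is again a modified Rota–Baxter operator
on `M ⊗ M`. Since `u_n = Pⁿ u_0`, multiplicativity follows by induction: expanding `Δ (P a ⋄ P b)`
with these identities, all terms match except those ending in `⊗ u_0`, where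
`(P + λ) a ⋄ (P + λ) b = (P + λ) (a ⋄ P b + P a ⋄ b)` precisely because the weight is `-λ²`.
-/

open TensorProduct

noncomputable def uvec {k : Type*} [CommRing k] (n : ℕ) : ℕ →₀ k := Finsupp.single n 1

open Finset

section ModifiedRotaBaxter

variable {k A : Type*} [CommRing k] [AddCommGroup A] [Module k A]

def IsModifiedRotaBaxter (D : A →ₗ[k] A →ₗ[k] A) (P : A →ₗ[k] A) (κ : k) : Prop :=
  ∀ x y, D (P x) (P y) = P (D x (P y)) + P (D (P x) y) + κ • D x y

variable {D : A →ₗ[k] A →ₗ[k] A} {P : A →ₗ[k] A} {e : A}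
  {Dt : A ⊗[k] A →ₗ[k] A ⊗[k] A →ₗ[k] A ⊗[k] A}

theorem lTensor_mul_tmul_unit (he : ∀ x, D x e = x)
    (hDt : ∀ x y x' y', Dt (x ⊗ₜ y) (x' ⊗ₜ y') = D x x' ⊗ₜ D y y') (c : A) (X : A ⊗[k] A) :
    Dt (P.lTensor A X) (c ⊗ₜ e) = P.lTensor A (Dt X (c ⊗ₜ e)) := by
  induction X using TensorProduct.induction_on with
  | zero => simp
  | tmul x y => simp [hDt, he]
  | add X X' hX hX' => simp [hX, hX']

theorem tmul_unit_mul_lTensor (he : ∀ x, D e x = x)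
    (hDt : ∀ x y x' y', Dt (x ⊗ₜ y) (x' ⊗ₜ y') = D x x' ⊗ₜ D y y') (c : A) (Y : A ⊗[k] A) :
    Dt (c ⊗ₜ e) (P.lTensor A Y) = P.lTensor A (Dt (c ⊗ₜ e) Y) := by
  induction Y using TensorProduct.induction_on with
  | zero => simp
  | tmul x y => simp [hDt, he]
  | add Y Y' hY hY' => simp [hY, hY']

theorem unit_tmul_unit_mul (he : ∀ x, D e x = x)
    (hDt : ∀ x y x' y', Dt (x ⊗ₜ y) (x' ⊗ₜ y') = D x x' ⊗ₜ D y y') (Y : A ⊗[k] A) :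
    Dt (e ⊗ₜ e) Y = Y := by
  induction Y using TensorProduct.induction_on with
  | zero => simp
  | tmul x y => simp [hDt, he]
  | add Y Y' hY hY' => simp [hY, hY']

theorem mul_unit_tmul_unit (he : ∀ x, D x e = x)
    (hDt : ∀ x y x' y', Dt (x ⊗ₜ y) (x' ⊗ₜ y') = D x x' ⊗ₜ D y y') (X : A ⊗[k] A) :
    Dt X (e ⊗ₜ e) = X := by
  induction X using TensorProduct.induction_on with
  | zero => simp
  | tmul x y => simp [hDt, he]
  | add X X' hX hX' => simp [hX, hX']

namespace IsModifiedRotaBaxter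

theorem lTensor {κ : k} (hP : IsModifiedRotaBaxter D P κ)
    (hDt : ∀ x y x' y', Dt (x ⊗ₜ y) (x' ⊗ₜ y') = D x x' ⊗ₜ D y y') :
    IsModifiedRotaBaxter Dt (P.lTensor A) κ := by
  intro X Y
  induction X using TensorProduct.induction_on with
  | zero => simp
  | add X X' hX hX' => simp only [map_add, LinearMap.add_apply, hX, hX', smul_add]; abel
  | tmul x y =>
    induction Y using TensorProduct.induction_on with
    | zero => simp
    | add Y Y' hY hY' => simp only [map_add, hY, hY', smul_add]; abel
    | tmul x' y' => simp only [LinearMap.lTensor_tmul, hDt, hP y y', tmul_add, tmul_smul]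

theorem add_smul_mul_add_smul {lam : k} (hP : IsModifiedRotaBaxter D P (-lam ^ 2)) (a b : A) :
    D (P a + lam • a) (P b + lam • b) =
      P (D a (P b) + D (P a) b) + lam • (D a (P b) + D (P a) b) := by
  simp only [map_add, map_smul, LinearMap.add_apply, LinearMap.smul_apply, hP a b]
  module

variable {lam : k} {Δ : A →ₗ[k] A ⊗[k] A}

theorem comul_mul_of_comul_mul (hP : IsModifiedRotaBaxter D P (-lam ^ 2))
    (he_left : ∀ x, D e x = x) (he_right : ∀ x, D x e = x)
    (hDt : ∀ x y x' y', Dt (x ⊗ₜ y) (x' ⊗ₜ y') = D x x' ⊗ₜ D y y')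
    (hΔP : ∀ x, Δ (P x) = P.lTensor A (Δ x) + (P x + lam • x) ⊗ₜ e) {a b : A}
    (h₀₁ : Δ (D a (P b)) = Dt (Δ a) (Δ (P b))) (h₁₀ : Δ (D (P a) b) = Dt (Δ (P a)) (Δ b))
    (h₀₀ : Δ (D a b) = Dt (Δ a) (Δ b)) :
    Δ (D (P a) (P b)) = Dt (Δ (P a)) (Δ (P b)) := by
  have hunit : ∀ a b, Dt (a ⊗ₜ e) (b ⊗ₜ e) = D a b ⊗ₜ e := fun a b => by rw [hDt, he_left]
  rw [hP a b, map_add, map_add, map_smul, hΔP, hΔP, h₀₁, h₁₀, h₀₀, hΔP a, hΔP b]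
  simp only [map_add, LinearMap.add_apply]
  rw [hP.lTensor hDt (Δ a) (Δ b), hunit, hP.add_smul_mul_add_smul a b]
  rw [lTensor_mul_tmul_unit he_right hDt, tmul_unit_mul_lTensor he_left hDt]
  simp only [map_add, LinearMap.add_apply, smul_add, add_tmul]
  abel

theorem comul_mul_iterate (hP : IsModifiedRotaBaxter D P (-lam ^ 2))
    (he_left : ∀ x, D e x = x) (he_right : ∀ x, D x e = x)
    (hDt : ∀ x y x' y', Dt (x ⊗ₜ y) (x' ⊗ₜ y') = D x x' ⊗ₜ D y y')
    (hΔe : Δ e = e ⊗ₜ e) (hΔP : ∀ x, Δ (P x) = P.lTensor A (Δ x) + (P x + lam • x) ⊗ₜ e)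
    (m n : ℕ) : Δ (D (P^[m] e) (P^[n] e)) = Dt (Δ (P^[m] e)) (Δ (P^[n] e)) := by
  induction m generalizing n with
  | zero => simp [he_left, hΔe, unit_tmul_unit_mul he_left hDt]
  | succ m ihm =>
    induction n with
    | zero => simp [he_right, hΔe, mul_unit_tmul_unit he_right hDt]
    | succ n ihn =>
      have h₀₁ := ihm (n + 1)
      simp only [Function.iterate_succ_apply'] at h₀₁ ihn ⊢
      exact hP.comul_mul_of_comul_mul he_left he_right hDt hΔP h₀₁ ihn (ihm n)

end IsModifiedRotaBaxter

end ModifiedRotaBaxter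

section FreeModifiedRotaBaxter

variable {k : Type*} [CommRing k]

theorem linearMap_ext_uvec {N : Type*} [AddCommMonoid N] [Module k N]
    {f g : (ℕ →₀ k) →ₗ[k] N} (h : ∀ n, f (uvec n) = g (uvec n)) : f = g :=
  Finsupp.basisSingleOne.ext h

theorem bilinearMap_ext_uvec {N : Type*} [AddCommMonoid N] [Module k N]
    {f g : (ℕ →₀ k) →ₗ[k] (ℕ →₀ k) →ₗ[k] N}
    (h : ∀ m n, f (uvec m) (uvec n) = g (uvec m) (uvec n)) : f = g :=
  LinearMap.ext_basis Finsupp.basisSingleOne Finsupp.basisSingleOne h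

variable (k) in
noncomputable def uShift : (ℕ →₀ k) →ₗ[k] (ℕ →₀ k) := Finsupp.lmapDomain k k Nat.succ

theorem uShift_uvec (n : ℕ) : uShift k (uvec n) = uvec (n + 1) := by
  simp [uShift, uvec]

theorem uShift_iterate_uvec_zero (n : ℕ) : (uShift k)^[n] (uvec 0) = uvec n := by
  induction n with
  | zero => rfl
  | succ n ih => rw [Function.iterate_succ_apply', ih, uShift_uvec]

def diamondCoeff (m n r : ℕ) : ℕ := (m + n - r).choose m * m.choose r

theorem diamondCoeff_eq_zero {m n r : ℕ} (h : min m n < r) : diamondCoeff m n r = 0 := by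
  rcases lt_or_ge m r with hm | hm
  · simp [diamondCoeff, Nat.choose_eq_zero_of_lt hm]
  · simp [diamondCoeff, Nat.choose_eq_zero_of_lt (show m + n - r < m by omega)]

theorem diamondCoeff_succ_succ_zero (m n : ℕ) :
    diamondCoeff (m + 1) (n + 1) 0 = diamondCoeff m (n + 1) 0 + diamondCoeff (m + 1) n 0 := by
  simp only [diamondCoeff, Nat.choose_zero_right, mul_one]
  rw [show m + 1 + (n + 1) - 0 = m + n + 1 + 1 by omega, Nat.choose_succ_succ',
    show m + (n + 1) - 0 = m + n + 1 by omega, show m + 1 + n - 0 = m + n + 1 by omega]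

theorem diamondCoeff_succ_succ_succ (m n r : ℕ) :
    diamondCoeff (m + 1) (n + 1) (r + 1) =
      diamondCoeff m (n + 1) (r + 1) + diamondCoeff (m + 1) n (r + 1) + diamondCoeff m n r := by
  rcases le_or_gt r (m + n) with h | h
  · simp only [diamondCoeff]
    rw [show m + 1 + (n + 1) - (r + 1) = m + n - r + 1 by omega,
      show m + (n + 1) - (r + 1) = m + n - r by omega,
      show m + 1 + n - (r + 1) = m + n - r by omega,
      Nat.choose_succ_succ' (m + n - r), Nat.choose_succ_succ' m r]
    ring
  · simp [diamondCoeff, Nat.choose_eq_zero_of_lt (show m < r by omega),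
      Nat.choose_eq_zero_of_lt (show m < r + 1 by omega),
      Nat.choose_eq_zero_of_lt (show m + 1 < r + 1 by omega)]

noncomputable def diamondTerm (κ : k) (m n r : ℕ) : ℕ →₀ k :=
  ((diamondCoeff m n r : k) * κ ^ r) • uvec (m + n - 2 * r)

theorem sum_diamondTerm_eq_of_min_lt (κ : k) {m n N : ℕ} (hN : min m n < N) :
    ∑ r ∈ range (min m n + 1), diamondTerm κ m n r = ∑ r ∈ range N, diamondTerm κ m n r := by
  refine sum_subset (range_subset_range.mpr hN) fun r _ hr => ?_
  rw [diamondTerm, diamondCoeff_eq_zero (by rw [mem_range] at hr; omega)]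
  simp

theorem uShift_diamondTerm (κ : k) (m n r : ℕ) :
    uShift k (diamondTerm κ m n r) =
      ((diamondCoeff m n r : k) * κ ^ r) • uvec (m + n + 1 - 2 * r) := by
  rw [diamondTerm, map_smul, uShift_uvec]
  rcases le_or_gt r (min m n) with h | h
  · rw [show m + n - 2 * r + 1 = m + n + 1 - 2 * r by omega]
  · simp [diamondCoeff_eq_zero h]

theorem diamondTerm_succ_succ_zero (κ : k) (m n : ℕ) :
    diamondTerm κ (m + 1) (n + 1) 0 =
      uShift k (diamondTerm κ m (n + 1) 0) + uShift k (diamondTerm κ (m + 1) n 0) := by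
  rw [uShift_diamondTerm, uShift_diamondTerm, diamondTerm, diamondCoeff_succ_succ_zero]
  simp only [show m + (n + 1) + 1 - 2 * 0 = m + 1 + (n + 1) - 2 * 0 by omega,
    show m + 1 + n + 1 - 2 * 0 = m + 1 + (n + 1) - 2 * 0 by omega]
  push_cast
  rw [← add_smul, add_mul]

theorem diamondTerm_succ_succ_succ (κ : k) (m n r : ℕ) :
    diamondTerm κ (m + 1) (n + 1) (r + 1) =
      uShift k (diamondTerm κ m (n + 1) (r + 1)) + uShift k (diamondTerm κ (m + 1) n (r + 1)) +
        κ • diamondTerm κ m n r := by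
  rw [uShift_diamondTerm, uShift_diamondTerm, diamondTerm, diamondTerm,
    diamondCoeff_succ_succ_succ,
    show m + 1 + (n + 1) - 2 * (r + 1) = m + n - 2 * r by omega,
    show m + (n + 1) + 1 - 2 * (r + 1) = m + n - 2 * r by omega,
    show m + 1 + n + 1 - 2 * (r + 1) = m + n - 2 * r by omega, smul_smul, ← add_smul, ← add_smul]
  congr 1
  push_cast
  ring

theorem isModifiedRotaBaxter_uShift (κ : k) {D : (ℕ →₀ k) →ₗ[k] (ℕ →₀ k) →ₗ[k] (ℕ →₀ k)}
    (hD : ∀ m n, D (uvec m) (uvec n) = ∑ r ∈ range (min m n + 1), diamondTerm κ m n r) :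
    IsModifiedRotaBaxter D (uShift k) κ := by
  have hbasis : ∀ m n, D (uvec (m + 1)) (uvec (n + 1)) =
      uShift k (D (uvec m) (uvec (n + 1))) + uShift k (D (uvec (m + 1)) (uvec n)) +
        κ • D (uvec m) (uvec n) := by
    intro m n
    rw [hD, hD, hD, hD, sum_diamondTerm_eq_of_min_lt κ (N := m + 2) (by omega),
      sum_diamondTerm_eq_of_min_lt κ (N := m + 2) (by omega),
      sum_diamondTerm_eq_of_min_lt κ (N := m + 2) (by omega),
      sum_diamondTerm_eq_of_min_lt κ (N := m + 1) (by omega), map_sum, map_sum, smul_sum,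
      sum_range_succ', sum_range_succ' _ (m + 1), sum_range_succ' _ (m + 1),
      sum_congr rfl fun r _ => diamondTerm_succ_succ_succ κ m n r, sum_add_distrib,
      sum_add_distrib, diamondTerm_succ_succ_zero]
    abel
  have h := bilinearMap_ext_uvec (f := D.compl₁₂ (uShift k) (uShift k))
    (g := (D.compr₂ (uShift k)).compl₂ (uShift k) + D.compr₂ (uShift k) ∘ₗ uShift k + κ • D)
    fun m n => by simpa [uShift_uvec] using hbasis m n
  intro x y
  simpa using LinearMap.congr_fun₂ h x y

theorem comul_uShift_uvec {lam : k} {Δ : (ℕ →₀ k) →ₗ[k] (ℕ →₀ k) ⊗[k] (ℕ →₀ k)}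
    (h0 : Δ (uvec 0) = uvec 0 ⊗ₜ[k] uvec 0)
    (hΔ : ∀ n : ℕ, Δ (uvec (n + 1)) =
      (∑ r ∈ range (n + 2), uvec r ⊗ₜ[k] (uvec (n + 1 - r) : ℕ →₀ k)) +
        lam • ∑ r ∈ range (n + 1), uvec r ⊗ₜ[k] (uvec (n - r) : ℕ →₀ k)) (n : ℕ) :
    Δ (uShift k (uvec n)) =
      (uShift k).lTensor _ (Δ (uvec n)) + (uShift k (uvec n) + lam • uvec n) ⊗ₜ uvec 0 := by
  rw [uShift_uvec, hΔ]
  cases n with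
  | zero => simp [h0, sum_range_succ, uShift_uvec, add_tmul]; abel
  | succ n =>
    have hpeel : ∀ N, ∑ r ∈ range (N + 2), (uvec r : ℕ →₀ k) ⊗ₜ[k] (uvec (N + 1 - r) : ℕ →₀ k) =
        (uShift k).lTensor _ (∑ r ∈ range (N + 1), (uvec r : ℕ →₀ k) ⊗ₜ[k] uvec (N - r)) +
          uvec (N + 1) ⊗ₜ uvec 0 := fun N => by
      rw [sum_range_succ, map_sum, Nat.sub_self]
      congr 1
      refine sum_congr rfl fun r hr => ?_
      rw [LinearMap.lTensor_tmul, uShift_uvec, show N + 1 - r = N - r + 1 by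
        rw [mem_range] at hr; omega]
    rw [hΔ, hpeel (n + 1), show n + 1 + 1 = n + 2 from rfl, hpeel n]
    simp only [map_add, map_smul, smul_add, add_tmul, smul_tmul']
    abel

theorem comul_uShift {lam : k} {Δ : (ℕ →₀ k) →ₗ[k] (ℕ →₀ k) ⊗[k] (ℕ →₀ k)}
    (h0 : Δ (uvec 0) = uvec 0 ⊗ₜ[k] uvec 0)
    (hΔ : ∀ n : ℕ, Δ (uvec (n + 1)) =
      (∑ r ∈ range (n + 2), uvec r ⊗ₜ[k] (uvec (n + 1 - r) : ℕ →₀ k)) +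
        lam • ∑ r ∈ range (n + 1), uvec r ⊗ₜ[k] (uvec (n - r) : ℕ →₀ k)) (x : ℕ →₀ k) :
    Δ (uShift k x) = (uShift k).lTensor _ (Δ x) + (uShift k x + lam • x) ⊗ₜ uvec 0 := by
  have h := linearMap_ext_uvec (f := Δ ∘ₗ uShift k)
    (g := (uShift k).lTensor _ ∘ₗ Δ +
      (TensorProduct.mk k (ℕ →₀ k) (ℕ →₀ k)).flip (uvec 0) ∘ₗ (uShift k + lam • LinearMap.id))
    fun n => by simpa [add_tmul, smul_tmul'] using comul_uShift_uvec h0 hΔ n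
  simpa [add_tmul, smul_tmul'] using LinearMap.congr_fun h x

theorem uvec_zero_mul {κ : k} {D : (ℕ →₀ k) →ₗ[k] (ℕ →₀ k) →ₗ[k] (ℕ →₀ k)}
    (hD : ∀ m n, D (uvec m) (uvec n) = ∑ r ∈ range (min m n + 1), diamondTerm κ m n r)
    (x : ℕ →₀ k) : D (uvec 0) x = x := by
  have h := linearMap_ext_uvec (f := D (uvec 0)) (g := LinearMap.id)
    fun n => by simp [hD, diamondTerm, diamondCoeff]
  exact LinearMap.congr_fun h x

theorem mul_uvec_zero {κ : k} {D : (ℕ →₀ k) →ₗ[k] (ℕ →₀ k) →ₗ[k] (ℕ →₀ k)}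
    (hD : ∀ m n, D (uvec m) (uvec n) = ∑ r ∈ range (min m n + 1), diamondTerm κ m n r)
    (x : ℕ →₀ k) : D x (uvec 0) = x := by
  have h := linearMap_ext_uvec (f := D.flip (uvec 0)) (g := LinearMap.id)
    fun n => by simp [hD, diamondTerm, diamondCoeff]
  exact LinearMap.congr_fun h x

end FreeModifiedRotaBaxter

/-- For the modified quasi-shuffle product `⋄` of weight `-λ²` determined by
`u_m ⋄ u_n = Σ_{r=0}^{min(m,n)} C(m+n-r, m) C(m, r) (-λ²)^r • u_{m+n-2r}`, and the
coproduct `Δ(u_0) = u_0 ⊗ u_0`,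
`Δ(u_n) = Σ_{r=0}^{n} u_r ⊗ u_{n-r} + λ • Σ_{r=0}^{n-1} u_r ⊗ u_{n-1-r}` (`n ≥ 1`),
`Δ` is multiplicative with respect to the componentwise product on `M ⊗ M`:
`Δ(a ⋄ b) = Δ(a) · Δ(b)`. -/
theorem stmt_17 {k : Type*} [CommRing k] (lam : k)
    (D : (ℕ →₀ k) →ₗ[k] (ℕ →₀ k) →ₗ[k] (ℕ →₀ k))
    (hD : ∀ m n : ℕ, D (uvec m) (uvec n) =
      ∑ r ∈ Finset.range (min m n + 1),
        ((((m + n - r).choose m * m.choose r : ℕ) : k) * (-lam ^ 2) ^ r) •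
          (uvec (m + n - 2 * r) : ℕ →₀ k))
    (Δ : (ℕ →₀ k) →ₗ[k] (ℕ →₀ k) ⊗[k] (ℕ →₀ k))
    (h0 : Δ (uvec 0) = uvec 0 ⊗ₜ[k] uvec 0)
    (hΔ : ∀ n : ℕ, Δ (uvec (n + 1)) =
      (∑ r ∈ Finset.range (n + 2), uvec r ⊗ₜ[k] (uvec (n + 1 - r) : ℕ →₀ k)) +
        lam • ∑ r ∈ Finset.range (n + 1), uvec r ⊗ₜ[k] (uvec (n - r) : ℕ →₀ k))
    (Dt : (ℕ →₀ k) ⊗[k] (ℕ →₀ k) →ₗ[k] (ℕ →₀ k) ⊗[k] (ℕ →₀ k) →ₗ[k]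
      (ℕ →₀ k) ⊗[k] (ℕ →₀ k))
    (hDt : ∀ x y x' y' : ℕ →₀ k,
      Dt (x ⊗ₜ[k] y) (x' ⊗ₜ[k] y') = (D x x') ⊗ₜ[k] (D y y')) :
    ∀ a b : ℕ →₀ k, Δ (D a b) = Dt (Δ a) (Δ b) := by
  have hD' : ∀ m n, D (uvec m) (uvec n) =
      ∑ r ∈ range (min m n + 1), diamondTerm (-lam ^ 2) m n r := hD
  have hbasis : ∀ m n, Δ (D (uvec m) (uvec n)) = Dt (Δ (uvec m)) (Δ (uvec n)) := fun m n => by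
    simpa only [uShift_iterate_uvec_zero] using
      (isModifiedRotaBaxter_uShift _ hD').comul_mul_iterate (uvec_zero_mul hD')
        (mul_uvec_zero hD') hDt h0 (comul_uShift h0 hΔ) m n
  exact LinearMap.congr_fun₂
    (bilinearMap_ext_uvec (f := D.compr₂ Δ) (g := (Dt ∘ₗ Δ).compl₂ Δ) hbasis)
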